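/- arXiv:2008.12067 — 4 statements merged into one kernel-verified Lean document; each statement's English description precedes it below -/
import Mathlib

section
/- Let α, β, δ ∈ F_{q^m} be such that the polynomial f_{α,β}(T, δT) = ∑_{0 ≤ i < j ≤ m−1} (α^{q^i}β^{q^j} − β^{q^i}α^{q^j})(δ^{q^j} − δ^{q^i}) T^{q^i+q^j} is nonzero. Then its degree satisfies q + 1 ≤ deg f_{α,β}(T, δT) ≤ q^{m−1} + q^{m−2}, and T^{q+1} divides f_{α,β}(T, δT). -/
open Polynomial Finset

/-- If the polynomial
f_{α,β}(T, δT) = ∑_{0 ≤ i < j ≤ m−1} (α^{q^i}β^{q^j} − β^{q^i}α^{q^j})(δ^{q^j} − δ^{q^i}) T^{q^i+q^j}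
is nonzero then q + 1 ≤ deg f ≤ q^{m−1} + q^{m−2}, and T^{q+1} divides f. -/
theorem stmt8 (q m : ℕ) (hq : IsPrimePow q) (hm : 2 ≤ m) (K : Type) [Field K] [Fintype K]
    (hK : Fintype.card K = q ^ m) (α β δ : K) (f : Polynomial K)
    (hf : f = ∑ i ∈ range m, ∑ j ∈ Ico (i + 1) m,
        C ((α ^ q ^ i * β ^ q ^ j - β ^ q ^ i * α ^ q ^ j) * (δ ^ q ^ j - δ ^ q ^ i)) *
          X ^ (q ^ i + q ^ j))
    (hne : f ≠ 0) :
    q + 1 ≤ f.natDegree ∧ f.natDegree ≤ q ^ (m - 1) + q ^ (m - 2) ∧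
      (X : Polynomial K) ^ (q + 1) ∣ f := by
  have hq2 : 2 ≤ q := hq.two_le
  have hdvd : (X : Polynomial K) ^ (q + 1) ∣ f := by
    rw [hf]
    refine Finset.dvd_sum fun i hi => Finset.dvd_sum fun j hj => ?_
    have hij : i + 1 ≤ j := (Finset.mem_Ico.mp hj).1
    have h1 : 1 ≤ q ^ i := Nat.one_le_pow _ _ (by omega)
    have h2 : q ≤ q ^ j := by
      calc q = q ^ 1 := (pow_one q).symm
        _ ≤ q ^ j := Nat.pow_le_pow_right (by omega) (by omega)
    exact Dvd.dvd.mul_left (pow_dvd_pow X (by omega)) _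
  refine ⟨?_, ?_, hdvd⟩
  · obtain ⟨g, hg⟩ := hdvd
    have hg0 : g ≠ 0 := by rintro rfl; rw [mul_zero] at hg; exact hne hg
    have hx : (X : Polynomial K) ^ (q + 1) ≠ 0 := pow_ne_zero _ X_ne_zero
    rw [hg, natDegree_mul hx hg0, natDegree_X_pow]
    omega
  · rw [hf]
    refine natDegree_sum_le_of_forall_le _ _ fun i hi => ?_
    refine natDegree_sum_le_of_forall_le _ _ fun j hj => ?_
    refine le_trans (natDegree_C_mul_X_pow_le _ _) ?_
    have hij : i + 1 ≤ j := (Finset.mem_Ico.mp hj).1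
    have hjm : j < m := (Finset.mem_Ico.mp hj).2
    have h1 : q ^ i ≤ q ^ (m - 2) := Nat.pow_le_pow_right (by omega) (by omega)
    have h2 : q ^ j ≤ q ^ (m - 1) := Nat.pow_le_pow_right (by omega) (by omega)
    omega
end

section
/- Let δ ∈ F_{q^m} \ F_q and let d be the smallest integer > 1 dividing m with δ ∈ F_{q^d}. Let L_δ ⊆ F_{q^m}[T] be the F_q-linear span of the polynomials f_{α,β}(T, δT) = Tr(αT)Tr(βδT) − Tr(αδT)Tr(βT) over all α, β ∈ F_{q^m}. Then the F_{q^m}-linear span of L_δ equals the F_{q^m}-span of {(δ^{q^j} − δ^{q^i}) T^{q^i+q^j} : 0 ≤ i < j ≤ m−1, d ∤ (j−i)}; in particular, dim over appropriate field of this monomial span is C(m,2) − C(m/d, 2)·d. -/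
/-!
Expanding the traces gives
`f_{α,β}(T, δT) = ∑_{i,j<m} α^{q^i} β^{q^j} (δ^{q^j} - δ^{q^i}) T^{q^i+q^j}`.
A polynomial of degree `< q^m` vanishing on `F_{q^m}` is zero, so the maps `α ↦ α^{q^i}`,
`i < m`, are linearly independent; hence a linear functional killing every `f_{α,β}` kills every
`N_{ij} = (δ^{q^j} - δ^{q^i}) T^{q^i+q^j}`, and the span of the `f_{α,β}` is the span of the
`N_{ij}`. These are antisymmetric in `(i, j)`, and `N_{ij} = 0` iff `δ^{q^{j-i}} = δ` iff
`d ∣ j - i`, since `d` is the period of `δ` under `x ↦ x^q`. The remaining `N_{ij}`, `i < j`,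
are nonzero multiples of pairwise distinct monomials (base-`q` expansions are unique), so the
dimension is the number of pairs `i < j < m` with `d ∤ j - i`.
-/

open Polynomial Finset

/-- The polynomial ∑_{j=0}^{m−1} c^{q^j} T^{q^j} ∈ F_{q^m}[T], i.e. Tr(cT) with Tr expanded. -/
noncomputable def trPoly (q m : ℕ) (K : Type) [Field K] (c : K) : Polynomial K :=
  ∑ j ∈ range m, C (c ^ q ^ j) * X ^ q ^ j

section Vanishing

variable {K : Type*} [Field K] [Fintype K] {ι : Type*} {s : Finset ι} {e : ι → ℕ}

theorem eq_zero_of_forall_sum_mul_pow_eq_zero (he : Set.InjOn e s)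
    (hlt : ∀ i ∈ s, e i < Fintype.card K) {c : ι → K}
    (h : ∀ x : K, ∑ i ∈ s, c i * x ^ e i = 0) {i : ι} (hi : i ∈ s) : c i = 0 := by
  set P : K[X] := ∑ i ∈ s, C (c i) * X ^ e i
  have hP : P = 0 := by
    refine eq_zero_of_natDegree_lt_card_of_eval_eq_zero P Function.injective_id
      (fun x => by simpa [P, eval_finsetSum] using h x) ?_
    refine (natDegree_sum_le_of_forall_le s _ (n := Fintype.card K - 1) fun j hj => ?_).trans_lt
      (Nat.sub_lt Fintype.card_pos one_pos)
    exact natDegree_C_mul_X_pow_le _ _ |>.trans (Nat.le_sub_one_of_lt (hlt j hj))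
  have hcoeff : P.coeff (e i) = c i := by
    rw [finsetSum_coeff, sum_eq_single i (fun j hj hji => ?_) (absurd hi), coeff_C_mul_X_pow,
      if_pos rfl]
    rw [coeff_C_mul_X_pow, if_neg fun h => hji (he hj hi h.symm)]
  rw [← hcoeff, hP, coeff_zero]

theorem eq_zero_of_forall_sum_sum_mul_pow_mul_pow_eq_zero (he : Set.InjOn e s)
    (hlt : ∀ i ∈ s, e i < Fintype.card K) {u : ι → ι → K}
    (h : ∀ x y : K, ∑ i ∈ s, ∑ j ∈ s, u i j * x ^ e i * y ^ e j = 0) {i j : ι} (hi : i ∈ s)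
    (hj : j ∈ s) : u i j = 0 := by
  refine eq_zero_of_forall_sum_mul_pow_eq_zero he hlt (fun y => ?_) hj
  refine eq_zero_of_forall_sum_mul_pow_eq_zero he hlt
    (c := fun i => ∑ j ∈ s, u i j * y ^ e j) (fun x => ?_) hi
  rw [← h x y]
  simp only [sum_mul]
  exact sum_congr rfl fun _ _ => sum_congr rfl fun _ _ => by ring

theorem span_sum_sum_pow_mul_pow_smul_eq {V : Type*} [AddCommGroup V] [Module K V]
    (he : Set.InjOn e s) (hlt : ∀ i ∈ s, e i < Fintype.card K) (v : ι → ι → V) :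
    Submodule.span K {g | ∃ x y : K, g = ∑ i ∈ s, ∑ j ∈ s, (x ^ e i * y ^ e j) • v i j} =
      Submodule.span K (Set.image2 v s s) := by
  apply le_antisymm <;> rw [Submodule.span_le]
  · rintro _ ⟨x, y, rfl⟩
    exact Submodule.sum_mem _ fun i hi => Submodule.sum_mem _ fun j hj =>
      Submodule.smul_mem _ _ (Submodule.subset_span (Set.mem_image2_of_mem hi hj))
  · rintro _ ⟨i, hi, j, hj, rfl⟩
    by_contra hv
    obtain ⟨φ, hφv, hφ⟩ := Submodule.exists_dual_map_eq_bot_of_notMem hv inferInstance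
    refine hφv (eq_zero_of_forall_sum_sum_mul_pow_mul_pow_eq_zero he hlt
      (u := fun i j => φ (v i j)) (fun x y => ?_) hi hj)
    have hφf : φ (∑ i ∈ s, ∑ j ∈ s, (x ^ e i * y ^ e j) • v i j) = 0 := by
      rw [← Submodule.mem_bot K, ← hφ]
      exact Submodule.mem_map_of_mem (Submodule.subset_span ⟨x, y, rfl⟩)
    rw [← hφf]
    simp only [map_sum, map_smul, smul_eq_mul]
    exact sum_congr rfl fun _ _ => sum_congr rfl fun _ _ => by ring

end Vanishing

theorem not_pow_succ_dvd_pow_add_pow {q i j : ℕ} (hq : 1 < q) (hij : i < j) :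
    ¬ q ^ (i + 1) ∣ q ^ i + q ^ j := by
  rw [Nat.dvd_add_left (pow_dvd_pow q hij), Nat.pow_dvd_pow_iff_le_right hq]
  omega

theorem pow_add_pow_inj {q i j i' j' : ℕ} (hq : 1 < q) (hij : i < j) (hij' : i' < j')
    (h : q ^ i + q ^ j = q ^ i' + q ^ j') : i = i' ∧ j = j' := by
  have hle : ∀ {a b a' b' : ℕ}, a < b → a' < b' → q ^ a + q ^ b = q ^ a' + q ^ b' → a ≤ a' := by
    intro a b a' b' hab hab' h
    by_contra! hlt
    refine not_pow_succ_dvd_pow_add_pow hq hab' (h ▸ ?_)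
    exact dvd_add (pow_dvd_pow q hlt) (pow_dvd_pow q (by omega))
  obtain rfl : i = i' := le_antisymm (hle hij hij' h) (hle hij' hij h.symm)
  exact ⟨rfl, Nat.pow_right_injective hq (Nat.add_left_cancel h)⟩

theorem linearIndependent_C_mul_X_pow {K ι : Type*} [Field K] {e : ι → ℕ}
    (he : Function.Injective e) {c : ι → K} (hc : ∀ i, c i ≠ 0) :
    LinearIndependent K fun i => C (c i) * X ^ e i := by
  convert ((basisMonomials K).linearIndependent.comp e he).units_smul
    (fun i => Units.mk0 (c i) (hc i)) with i
  simp [C_mul_X_pow_eq_monomial, smul_monomial]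

theorem isPeriodicPt_pow_iff {M : Type*} [Monoid M] (q : ℕ) (x : M) (n : ℕ) :
    Function.IsPeriodicPt (· ^ q) n x ↔ x ^ q ^ n = x := by
  rw [Function.IsPeriodicPt, Function.IsFixedPt, pow_iterate]

section Frobenius

variable {K : Type*} [Field K] [Fintype K] {q m : ℕ}

theorem pow_pow_injective (hK : Fintype.card K = q ^ m) (hm : 0 < m) (i : ℕ) :
    Function.Injective fun x : K => x ^ q ^ i := by
  rw [← pow_iterate]
  refine Function.Injective.iterate (Function.LeftInverse.injective (g := (· ^ q ^ (m - 1)))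
    fun x => ?_) i
  change (x ^ q) ^ q ^ (m - 1) = x
  rw [← pow_mul, ← pow_succ', Nat.sub_add_cancel hm, ← hK, FiniteField.pow_card]

theorem minimalPeriod_pow_eq {δ : K} {d : ℕ} (hK : Fintype.card K = q ^ m) (hδ : δ ^ q ≠ δ)
    (hd1 : 1 < d) (hδd : δ ^ q ^ d = δ)
    (hmin : ∀ e, 1 < e → e ∣ m → δ ^ q ^ e = δ → d ≤ e) :
    Function.minimalPeriod (· ^ q) δ = d := by
  have hδd' := (isPeriodicPt_pow_iff q δ d).mpr hδd
  have hpos := hδd'.minimalPeriod_pos (by omega)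
  have hper := (isPeriodicPt_pow_iff q δ _).mp (Function.isPeriodicPt_minimalPeriod (· ^ q) δ)
  have hne : Function.minimalPeriod (· ^ q) δ ≠ 1 := fun h => hδ (by rwa [h, pow_one] at hper)
  have hdvd_m : Function.minimalPeriod (· ^ q) δ ∣ m := by
    refine ((isPeriodicPt_pow_iff q δ m).mpr ?_).minimalPeriod_dvd
    rw [← hK, FiniteField.pow_card]
  exact le_antisymm (Nat.le_of_dvd (by omega) hδd'.minimalPeriod_dvd)
    (hmin _ (by omega) hdvd_m hper)

theorem pow_pow_eq_pow_pow_iff {δ : K} {d : ℕ} (hK : Fintype.card K = q ^ m) (hm : 0 < m)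
    (hδ : δ ^ q ≠ δ) (hd1 : 1 < d) (hδd : δ ^ q ^ d = δ)
    (hmin : ∀ e, 1 < e → e ∣ m → δ ^ q ^ e = δ → d ≤ e) {i j : ℕ} (hij : i ≤ j) :
    δ ^ q ^ j = δ ^ q ^ i ↔ d ∣ j - i := by
  obtain ⟨k, rfl⟩ := Nat.exists_eq_add_of_le hij
  rw [add_tsub_cancel_left, pow_add, mul_comm, pow_mul, (pow_pow_injective hK hm i).eq_iff,
    ← isPeriodicPt_pow_iff, Function.isPeriodicPt_iff_minimalPeriod_dvd,
    minimalPeriod_pow_eq hK hδ hd1 hδd hmin]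

end Frobenius

theorem card_filter_dvd_sub_range (d j : ℕ) : #{i ∈ range j | d ∣ j - i} = j / d := by
  rw [← Nat.card_multiples, card_filter, card_filter, ← sum_range_reflect]
  refine sum_congr rfl fun i hi => ?_
  rw [mem_range] at hi
  rw [show j - (j - 1 - i) = i + 1 by omega]

theorem sum_range_mul_div (d t : ℕ) : ∑ j ∈ range (d * t), j / d = d * t.choose 2 := by
  induction t with
  | zero => simp
  | succ t ih =>
    have hblock : ∑ i ∈ range d, (d * t + i) / d = d * t := by
      rw [sum_congr rfl fun i hi => ?_, sum_const, card_range, smul_eq_mul]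
      have hi : i < d := mem_range.mp hi
      rw [Nat.mul_add_div (Nat.zero_lt_of_lt hi), Nat.div_eq_of_lt hi, add_zero]
    rw [mul_add_one, sum_range_add, ih, hblock, Nat.choose_succ_succ', Nat.choose_one_right]
    ring

-- A pair `i < j` is encoded as `⟨j, i⟩`, so that the count is a sum over `j`.
theorem card_sigma_filter_not_dvd_sub {d m : ℕ} (hdm : d ∣ m) :
    #((range m).sigma fun j => {i ∈ range j | ¬ d ∣ j - i}) =
      m.choose 2 - (m / d).choose 2 * d := by
  have hfiber : ∀ j, #{i ∈ range j | ¬ d ∣ j - i} = j - j / d := fun j => by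
    rw [filter_not, card_sdiff_of_subset (filter_subset _ _), card_range, card_filter_dvd_sub_range]
  rw [card_sigma, sum_congr rfl fun j _ => hfiber j,
    sum_tsub_distrib _ fun j _ => Nat.div_le_self j d, sum_range_id, ← Nat.choose_two_right]
  obtain ⟨t, rfl⟩ := hdm
  rcases d.eq_zero_or_pos with rfl | hd
  · simp
  · rw [sum_range_mul_div, Nat.mul_div_cancel_left t hd, mul_comm (t.choose 2)]

section PairMonomial

variable {K : Type*} [Field K]

noncomputable def pairMonomial (q : ℕ) (δ : K) (i j : ℕ) : K[X] :=
  C (δ ^ q ^ j - δ ^ q ^ i) * X ^ (q ^ i + q ^ j)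

theorem pairMonomial_swap (q : ℕ) (δ : K) (i j : ℕ) :
    pairMonomial q δ j i = -pairMonomial q δ i j := by
  rw [pairMonomial, pairMonomial, ← neg_sub, C_neg, neg_mul, add_comm]

theorem pairMonomial_eq_zero {q : ℕ} {δ : K} {i j : ℕ} (h : δ ^ q ^ j = δ ^ q ^ i) :
    pairMonomial q δ i j = 0 := by
  rw [pairMonomial, h, sub_self, C_0, zero_mul]

variable {q m d : ℕ} {δ : K}

theorem span_image2_pairMonomial_eq
    (hδ : ∀ i j, i ≤ j → d ∣ j - i → δ ^ q ^ j = δ ^ q ^ i) :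
    Submodule.span K (Set.image2 (pairMonomial q δ) (range m) (range m)) =
      Submodule.span K {g | ∃ i j : ℕ, i < j ∧ j ≤ m - 1 ∧ ¬ d ∣ (j - i) ∧
        g = pairMonomial q δ i j} := by
  set M := {g | ∃ i j : ℕ, i < j ∧ j ≤ m - 1 ∧ ¬ d ∣ (j - i) ∧ g = pairMonomial q δ i j}
  have hlt : ∀ i j, i < j → j < m → pairMonomial q δ i j ∈ Submodule.span K M := by
    intro i j hij hjm
    by_cases hd : d ∣ j - i
    · rw [pairMonomial_eq_zero (hδ i j hij.le hd)]
      exact Submodule.zero_mem _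
    · exact Submodule.subset_span ⟨i, j, hij, by omega, hd, rfl⟩
  apply le_antisymm
  · rw [Submodule.span_le]
    rintro _ ⟨i, hi, j, hj, rfl⟩
    rw [coe_range, Set.mem_Iio] at hi hj
    rcases lt_trichotomy i j with hij | rfl | hji
    · exact hlt i j hij hj
    · rw [pairMonomial_eq_zero rfl]
      exact Submodule.zero_mem _
    · rw [pairMonomial_swap]
      exact Submodule.neg_mem _ (hlt j i hji hi)
  · refine Submodule.span_mono ?_
    rintro _ ⟨i, j, hij, hjm, -, rfl⟩
    exact Set.mem_image2_of_mem (mem_range.mpr (by omega)) (mem_range.mpr (by omega))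

theorem finrank_span_pairMonomial (hq : 1 < q)
    (hδ : ∀ i j, i ≤ j → δ ^ q ^ j = δ ^ q ^ i → d ∣ j - i) :
    Module.finrank K (Submodule.span K {g | ∃ i j : ℕ, i < j ∧ j ≤ m - 1 ∧ ¬ d ∣ (j - i) ∧
        g = pairMonomial q δ i j}) =
      #((range m).sigma fun j => {i ∈ range j | ¬ d ∣ j - i}) := by
  set S := (range m).sigma fun j => {i ∈ range j | ¬ d ∣ j - i}
  have hmem : ∀ j i : ℕ, ⟨j, i⟩ ∈ S ↔ i < j ∧ j < m ∧ ¬ d ∣ j - i := by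
    intro j i
    simp only [S, mem_sigma, mem_filter, mem_range]
    omega
  have hrange : {g | ∃ i j : ℕ, i < j ∧ j ≤ m - 1 ∧ ¬ d ∣ (j - i) ∧ g = pairMonomial q δ i j} =
      Set.range fun p : S => pairMonomial q δ p.1.2 p.1.1 := by
    ext g
    constructor
    · rintro ⟨i, j, hij, hjm, hd, rfl⟩
      exact ⟨⟨⟨j, i⟩, (hmem _ _).mpr ⟨hij, by omega, hd⟩⟩, rfl⟩
    · rintro ⟨⟨⟨j, i⟩, hp⟩, rfl⟩
      obtain ⟨hij, hjm, hd⟩ := (hmem _ _).mp hp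
      exact ⟨i, j, hij, by omega, hd, rfl⟩
  have hinj : Function.Injective fun p : S => q ^ p.1.2 + q ^ p.1.1 := by
    rintro ⟨⟨j, i⟩, hp⟩ ⟨⟨j', i'⟩, hp'⟩ h
    obtain ⟨rfl, rfl⟩ := pow_add_pow_inj hq ((hmem _ _).mp hp).1 ((hmem _ _).mp hp').1 h
    rfl
  have hcoeff : ∀ p : S, δ ^ q ^ p.1.1 - δ ^ q ^ p.1.2 ≠ 0 := fun ⟨⟨j, i⟩, hp⟩ h =>
    ((hmem _ _).mp hp).2.2 (hδ i j ((hmem _ _).mp hp).1.le (sub_eq_zero.mp h))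
  have hli : LinearIndependent K fun p : S => pairMonomial q δ p.1.2 p.1.1 :=
    linearIndependent_C_mul_X_pow hinj hcoeff
  rw [hrange, finrank_span_eq_card hli, Fintype.card_coe]

end PairMonomial

theorem trPoly_mul_sub_trPoly_mul {K : Type} [Field K] (q m : ℕ) (δ α β : K) :
    trPoly q m K α * trPoly q m K (β * δ) - trPoly q m K (α * δ) * trPoly q m K β =
      ∑ i ∈ range m, ∑ j ∈ range m, (α ^ q ^ i * β ^ q ^ j) • pairMonomial q δ i j := by
  simp only [trPoly, sum_mul_sum, ← sum_sub_distrib, pairMonomial, smul_eq_C_mul]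
  refine sum_congr rfl fun i _ => sum_congr rfl fun j _ => ?_
  simp only [mul_pow, C_mul, C_sub, pow_add]
  ring

/-- For δ ∈ F_{q^m} \ F_q with d > 1 minimal dividing m such that
δ ∈ F_{q^d}, the F_{q^m}-span of the polynomials f_{α,β}(T, δT) equals the
F_{q^m}-span of the monomials (δ^{q^j} − δ^{q^i}) T^{q^i+q^j} with i < j ≤ m−1,
d ∤ (j−i); and the dimension of this span is C(m,2) − C(m/d,2)·d. -/
theorem stmt12 (q m d : ℕ) (hq : IsPrimePow q) (hm : 2 ≤ m) (K : Type) [Field K] [Fintype K]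
    (hK : Fintype.card K = q ^ m) (δ : K) (hδ : δ ^ q ≠ δ)
    (hd1 : 1 < d) (hdm : d ∣ m) (hδd : δ ^ q ^ d = δ)
    (hmin : ∀ e, 1 < e → e ∣ m → δ ^ q ^ e = δ → d ≤ e) :
    Submodule.span K {g : Polynomial K | ∃ α β : K,
        g = trPoly q m K α * trPoly q m K (β * δ) -
            trPoly q m K (α * δ) * trPoly q m K β} =
      Submodule.span K {g : Polynomial K | ∃ i j : ℕ, i < j ∧ j ≤ m - 1 ∧ ¬ d ∣ (j - i) ∧
        g = C (δ ^ q ^ j - δ ^ q ^ i) * X ^ (q ^ i + q ^ j)} ∧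
    Module.finrank K ↥(Submodule.span K {g : Polynomial K |
        ∃ i j : ℕ, i < j ∧ j ≤ m - 1 ∧ ¬ d ∣ (j - i) ∧
          g = C (δ ^ q ^ j - δ ^ q ^ i) * X ^ (q ^ i + q ^ j)}) =
      Nat.choose m 2 - Nat.choose (m / d) 2 * d := by
  have hfrob : ∀ i j, i ≤ j → (δ ^ q ^ j = δ ^ q ^ i ↔ d ∣ j - i) := fun i j hij =>
    pow_pow_eq_pow_pow_iff hK (by omega) hδ hd1 hδd hmin hij
  have hexp : Set.InjOn (q ^ ·) (range m : Set ℕ) := (Nat.pow_right_injective hq.two_le).injOn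
  have hlt : ∀ i ∈ range m, q ^ i < Fintype.card K := fun i hi =>
    hK ▸ Nat.pow_lt_pow_right hq.one_lt (mem_range.mp hi)
  refine ⟨?_, ?_⟩
  · simp_rw [trPoly_mul_sub_trPoly_mul]
    rw [span_sum_sum_pow_mul_pow_smul_eq hexp hlt]
    exact span_image2_pairMonomial_eq fun i j hij => (hfrob i j hij).mpr
  · rw [← card_sigma_filter_not_dvd_sub hdm]
    exact finrank_span_pairMonomial hq.one_lt fun i j hij => (hfrob i j hij).mp
end

section
/- Fix m ≥ 4 and set d = q^{2(m−2)} and N = (q^m − 1)/(q − 1). Then ⌊(d−1)/2⌋ divided by (N − (q^{m−1} + q^{m−3} − q − 1))/2 is strictly less than q^{m−2} + q^{m−3}. Consequently, for any set E with |E| ≤ ⌊(d−1)/2⌋ distributed among at least q^{m−2} + q^{m−3} disjoint sets of size N, some set contains fewer than (N − (q^{m−1} + q^{m−3} − q − 1))/2 elements of E. -/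
/-!
Since `N = 1 + q + ⋯ + q^{m-1}`, the quantity `S = N - (q^{m-1} + q^{m-3} - q - 1)` exceeds
`q^{m-2}`. Hence `(q^{m-2} + q^{m-3}) · S/2 > q^{2(m-2)}/2 > ⌊(d-1)/2⌋`, which is the
inequality; if every one of at least `q^{m-2} + q^{m-3}` disjoint sets met `E` in at least
`S/2` elements, `E` would have more than `⌊(d-1)/2⌋` elements.
-/

open Finset Function

theorem Finset.exists_card_inter_lt_of_card_lt_mul {K α ι : Type*} [Field K] [LinearOrder K]
    [IsStrictOrderedRing K] [DecidableEq α] [Fintype ι] {A : ι → Finset α}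
    (hA : Pairwise (Disjoint on A)) (E : Finset α) {c : K}
    (hE : (#E : K) < Fintype.card ι * c) : ∃ i, (#(E ∩ A i) : K) < c := by
  have hsum : ∑ i, #(E ∩ A i) ≤ #E := by
    rw [← card_biUnion fun i _ j _ hij =>
      (hA hij).mono inter_subset_right inter_subset_right]
    exact card_le_card (biUnion_subset.2 fun i _ => inter_subset_left)
  obtain ⟨i, -, hi⟩ := exists_lt_of_sum_lt (s := univ) (f := fun i => (#(E ∩ A i) : K))
    (g := fun _ => c) <| calc
      ∑ i, (#(E ∩ A i) : K) ≤ #E := by exact_mod_cast hsum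
      _ < ∑ _i : ι, c := by simpa [card_univ] using hE
  exact ⟨i, hi⟩

theorem Nat.pow_add_pow_add_pow_le_geomSum {q : ℕ} (hq : 2 ≤ q) (k : ℕ) :
    q ^ (k + 2) + q ^ (k + 1) + q ^ k ≤ (q ^ (k + 3) - 1) / (q - 1) := by
  rw [← Nat.geomSum_eq hq, sum_range_succ, sum_range_succ, sum_range_succ]
  omega

theorem Nat.cast_sq_sub_one_div_two_lt_mul {K : Type*} [Field K] [LinearOrder K]
    [IsStrictOrderedRing K] {x : ℕ} (hx : 0 < x) {S : K} (hS : (x : K) ≤ S) :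
    (((x ^ 2 - 1) / 2 : ℕ) : K) < x * (S / 2) := by
  have hx1 : (1 : K) ≤ x := by exact_mod_cast hx
  calc (((x ^ 2 - 1) / 2 : ℕ) : K) ≤ ((x ^ 2 - 1 : ℕ) : K) / 2 := Nat.cast_div_le
    _ = ((x : K) ^ 2 - 1) / 2 := by rw [Nat.cast_sub (Nat.one_le_pow _ _ hx)]; push_cast; rfl
    _ < x * (S / 2) := by nlinarith

/-- For m ≥ 4, with d = q^{2(m−2)} and N = (q^m − 1)/(q − 1),
⌊(d−1)/2⌋ / ((N − (q^{m−1} + q^{m−3} − q − 1))/2) < q^{m−2} + q^{m−3}; consequently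
any set E with |E| ≤ ⌊(d−1)/2⌋ distributed among at least q^{m−2} + q^{m−3}
pairwise disjoint sets of size N has some set containing fewer than
(N − (q^{m−1} + q^{m−3} − q − 1))/2 of its elements. -/
theorem stmt16 (q m : ℕ) (hq : IsPrimePow q) (hm : 4 ≤ m) :
    ((((q ^ (2 * (m - 2)) - 1) / 2 : ℕ) : ℝ) /
        (((((q ^ m - 1) / (q - 1) : ℕ) : ℝ) -
          ((q : ℝ) ^ (m - 1) + (q : ℝ) ^ (m - 3) - q - 1)) / 2) <
      (q : ℝ) ^ (m - 2) + (q : ℝ) ^ (m - 3)) ∧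
    (∀ (α : Type) [DecidableEq α] (ι : Type) [Fintype ι] (A : ι → Finset α) (E : Finset α),
      q ^ (m - 2) + q ^ (m - 3) ≤ Fintype.card ι →
      (∀ i j : ι, i ≠ j → Disjoint (A i) (A j)) →
      (∀ i : ι, (A i).card = (q ^ m - 1) / (q - 1)) →
      E.card ≤ (q ^ (2 * (m - 2)) - 1) / 2 →
      ∃ i : ι, ((E ∩ A i).card : ℝ) <
        (((((q ^ m - 1) / (q - 1) : ℕ) : ℝ) -
          ((q : ℝ) ^ (m - 1) + (q : ℝ) ^ (m - 3) - q - 1)) / 2)) := by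
  obtain ⟨k, rfl⟩ : ∃ k, m = k + 3 := ⟨m - 3, by omega⟩
  simp only [show k + 3 - 1 = k + 2 by omega, show k + 3 - 2 = k + 1 by omega,
    show k + 3 - 3 = k by omega, show 2 * (k + 1) = (k + 1) * 2 by ring, pow_mul]
  set S : ℝ := (((q ^ (k + 3) - 1) / (q - 1) : ℕ) : ℝ) - ((q : ℝ) ^ (k + 2) + q ^ k - q - 1)
  have hpow_le_S : ((q ^ (k + 1) : ℕ) : ℝ) ≤ S := by
    have hN : ((q ^ (k + 2) + q ^ (k + 1) + q ^ k : ℕ) : ℝ) ≤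
        ((q ^ (k + 3) - 1) / (q - 1) : ℕ) :=
      mod_cast Nat.pow_add_pow_add_pow_le_geomSum hq.two_le k
    push_cast at hN ⊢
    linarith [(q.cast_nonneg : (0 : ℝ) ≤ q)]
  have hS_pos : 0 < S / 2 := by
    have hpow_pos : 0 < ((q ^ (k + 1) : ℕ) : ℝ) := mod_cast pow_pos hq.pos _
    linarith
  have hmain :
      ((((q ^ (k + 1)) ^ 2 - 1) / 2 : ℕ) : ℝ) < ((q : ℝ) ^ (k + 1) + q ^ k) * (S / 2) :=
    calc _ < ((q ^ (k + 1) : ℕ) : ℝ) * (S / 2) :=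
          Nat.cast_sq_sub_one_div_two_lt_mul (pow_pos hq.pos _) hpow_le_S
      _ ≤ ((q : ℝ) ^ (k + 1) + q ^ k) * (S / 2) := by
          push_cast
          gcongr
          exact le_add_of_nonneg_right (by positivity)
  refine ⟨(div_lt_iff₀ hS_pos).2 hmain, fun α _ ι _ A E hι hA _ hE => ?_⟩
  refine exists_card_inter_lt_of_card_lt_mul hA E <|
    (hmain.trans_le' (mod_cast hE)).trans_le ?_
  gcongr
  exact_mod_cast hι
end

section
/- Let δ ∈ F_{q^m} generate F_{q^m} over F_q (i.e., δ lies in no proper subfield containing F_q), with m ≥ 3. Let L_δ(F_q) be the F_q-span of the polynomials f_{α,β}(T, δT) for α, β ∈ F_{q^m}, and let N = (q^m−1)/(q−1). Then the F_q-linear evaluation map from L_δ(F_q) to F_q^N sending F to (F(γ^{j_1}), ..., F(γ^{j_N})), evaluated at N distinct points of F_{q^m}^*, is injective. -/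
open Polynomial Finset

lemma trPoly_natDegree_le (q m : ℕ) (hq : 1 ≤ q) (K : Type) [Field K] (c : K) :
    (trPoly q m K c).natDegree ≤ q ^ (m - 1) := by
  apply natDegree_sum_le_of_forall_le
  intro j hj
  refine (natDegree_mul_le).trans ?_
  simp only [natDegree_C, natDegree_X_pow, zero_add]
  exact Nat.pow_le_pow_right hq (by simpa using Nat.le_sub_one_of_lt (mem_range.mp hj))

lemma gen_natDegree_le (q m : ℕ) (hq : 1 ≤ q) (hm : 2 ≤ m) (K : Type) [Field K]
    (α β δ : K) :
    (trPoly q m K α * trPoly q m K (β * δ) -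
        trPoly q m K (α * δ) * trPoly q m K β).natDegree ≤ q ^ (m - 1) + q ^ (m - 2) := by
  obtain ⟨n, rfl⟩ : ∃ n, m = n + 2 := ⟨m - 2, by omega⟩
  set Q := q ^ (n + 1) with hQ
  have hsplit : ∀ c : K, trPoly q (n + 2) K c = trPoly q (n + 1) K c + C (c ^ Q) * X ^ Q := by
    intro c; unfold trPoly; rw [sum_range_succ]
  have hzero : (C (α ^ Q) * X ^ Q) * (C ((β * δ) ^ Q) * X ^ Q)
      = (C ((α * δ) ^ Q) * X ^ Q) * (C (β ^ Q) * X ^ Q) := by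
    rw [mul_pow, mul_pow, map_mul, map_mul]; ring
  have heq : trPoly q (n+2) K α * trPoly q (n+2) K (β * δ) -
      trPoly q (n+2) K (α * δ) * trPoly q (n+2) K β
      = trPoly q (n+1) K α * trPoly q (n+1) K (β * δ)
        + trPoly q (n+1) K α * (C ((β*δ) ^ Q) * X ^ Q)
        + (C (α ^ Q) * X ^ Q) * trPoly q (n+1) K (β * δ)
        - trPoly q (n+1) K (α * δ) * trPoly q (n+1) K β
        - trPoly q (n+1) K (α * δ) * (C (β ^ Q) * X ^ Q)
        - (C ((α*δ) ^ Q) * X ^ Q) * trPoly q (n+1) K β := by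
    rw [hsplit α, hsplit (β * δ), hsplit (α * δ), hsplit β]
    linear_combination hzero
  rw [heq]
  have hS : ∀ c : K, (trPoly q (n+1) K c).natDegree ≤ q ^ n := by
    intro c; simpa using trPoly_natDegree_le q (n+1) hq K c
  have hT : ∀ c : K, (C (c ^ Q) * X ^ Q).natDegree ≤ Q := by
    intro c; refine (natDegree_mul_le).trans ?_; simp
  have hqn : q ^ n ≤ Q := Nat.pow_le_pow_right hq (by omega)
  have hsimp1 : n + 2 - 1 = n + 1 := by omega
  have hsimp2 : n + 2 - 2 = n := by omega
  rw [hsimp1, hsimp2]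
  refine (natDegree_sub_le _ _).trans ?_
  have h6 : (C ((α*δ) ^ Q) * X ^ Q * trPoly q (n+1) K β).natDegree ≤ q ^ (n+1) + q ^ n :=
    (natDegree_mul_le).trans (by have := hT (α*δ); have := hS β; omega)
  refine max_le ?_ h6
  refine (natDegree_sub_le _ _).trans ?_
  have h5 : (trPoly q (n+1) K (α*δ) * (C (β ^ Q) * X ^ Q)).natDegree ≤ q ^ (n+1) + q ^ n :=
    (natDegree_mul_le).trans (by have := hT β; have := hS (α*δ); omega)
  refine max_le ?_ h5
  refine (natDegree_sub_le _ _).trans ?_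
  have h4 : (trPoly q (n+1) K (α*δ) * trPoly q (n+1) K β).natDegree ≤ q ^ (n+1) + q ^ n :=
    (natDegree_mul_le).trans (by have := hS (α*δ); have := hS β; omega)
  refine max_le ?_ h4
  refine (natDegree_add_le _ _).trans ?_
  have h3 : ((C (α ^ Q) * X ^ Q) * trPoly q (n+1) K (β*δ)).natDegree ≤ q ^ (n+1) + q ^ n :=
    (natDegree_mul_le).trans (by have := hT α; have := hS (β*δ); omega)
  refine max_le ?_ h3
  refine (natDegree_add_le _ _).trans ?_
  have h1 : (trPoly q (n+1) K α * trPoly q (n+1) K (β*δ)).natDegree ≤ q ^ (n+1) + q ^ n :=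
    (natDegree_mul_le).trans (by have := hS α; have := hS (β*δ); omega)
  have h2 : (trPoly q (n+1) K α * (C ((β*δ) ^ Q) * X ^ Q)).natDegree ≤ q ^ (n+1) + q ^ n :=
    (natDegree_mul_le).trans (by have := hT (β*δ); have := hS α; omega)
  exact max_le h1 h2

lemma geom_div (q m : ℕ) (hq : 2 ≤ q) : (q ^ m - 1) / (q - 1) = ∑ i ∈ range m, q ^ i := by
  have h1 : 1 ≤ q := by omega
  have key : (q - 1) * ∑ i ∈ range m, q ^ i = q ^ m - 1 := by
    have hz := geom_sum_mul (x := (q : ℤ)) m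
    zify [h1, Nat.one_le_pow m q (by omega)]
    linear_combination hz
  rw [← key, Nat.mul_div_cancel_left _ (by omega)]

lemma D_lt_N (q m : ℕ) (hq : 2 ≤ q) (hm : 3 ≤ m) :
    q ^ (m - 1) + q ^ (m - 2) < (q ^ m - 1) / (q - 1) := by
  rw [geom_div q m hq]
  obtain ⟨n, rfl⟩ : ∃ n, m = n + 3 := ⟨m - 3, by omega⟩
  rw [sum_range_succ, sum_range_succ]
  have h0 : q ^ 0 ≤ ∑ i ∈ range (n + 1), q ^ i :=
    Finset.single_le_sum (f := fun i => q ^ i)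
      (fun i _ => Nat.zero_le _) (mem_range.mpr (by omega : (0:ℕ) < n + 1))
  simp only [pow_zero] at h0
  have e1 : n + 3 - 1 = n + 2 := by omega
  have e2 : n + 3 - 2 = n + 1 := by omega
  rw [e1, e2]; omega

set_option maxHeartbeats 1000000 in
/-- For δ generating F_{q^m} over F_q (m ≥ 3), the evaluation map on the
F_q-span L_δ of the polynomials f_{α,β}(T, δT), evaluated at N = (q^m−1)/(q−1) distinct
points of F_{q^m}^*, is injective. -/
theorem stmt19 (q m : ℕ) (hm : 3 ≤ m) (F K : Type) [Field F] [Fintype F] [Field K] [Fintype K]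
    [Algebra F K] (hq : Fintype.card F = q) (hrank : Module.finrank F K = m)
    (δ : K) (hδ : Algebra.adjoin F {δ} = (⊤ : Subalgebra F K))
    (pts : Fin ((q ^ m - 1) / (q - 1)) → Kˣ) (hpts : Function.Injective pts) :
    Function.Injective (fun g : ↥(Submodule.span F {g : Polynomial K | ∃ α β : K,
        g = trPoly q m K α * trPoly q m K (β * δ) -
            trPoly q m K (α * δ) * trPoly q m K β}) =>
      fun i => Polynomial.eval ((pts i : K)) (g : Polynomial K)) := by
  classical
  have hq2 : 2 ≤ q := by rw [← hq]; exact Fintype.one_lt_card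
  have hdeg : ∀ g ∈ Submodule.span F {g : Polynomial K | ∃ α β : K,
      g = trPoly q m K α * trPoly q m K (β * δ) -
          trPoly q m K (α * δ) * trPoly q m K β},
      g.natDegree ≤ q ^ (m - 1) + q ^ (m - 2) := by
    intro g hg
    induction hg using Submodule.span_induction with
    | mem x hx =>
      obtain ⟨α, β, rfl⟩ := hx
      exact gen_natDegree_le q m (by omega) (by omega) K α β δ
    | zero => simp
    | add x y _ _ hx hy => exact (natDegree_add_le x y).trans (max_le hx hy)
    | smul c x _ hx =>
      rw [Algebra.smul_def]
      refine (natDegree_mul_le).trans ?_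
      have h0 : (algebraMap F (Polynomial K) c).natDegree = 0 := by
        simp [Polynomial.algebraMap_apply]
      omega
  intro g1 g2 h
  have hroot : ∀ i, Polynomial.eval ((pts i : K))
      ((g1 : Polynomial K) - (g2 : Polynomial K)) = 0 := by
    intro i
    have hi := congrFun h i
    simp only at hi
    rw [eval_sub, hi, sub_self]
  by_cases hdz : (g1 : Polynomial K) - (g2 : Polynomial K) = 0
  · exact Subtype.ext (sub_eq_zero.mp hdz)
  · exfalso
    set d : Polynomial K := (g1 : Polynomial K) - (g2 : Polynomial K) with hd
    have hdmem : d ∈ Submodule.span F {g : Polynomial K | ∃ α β : K,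
        g = trPoly q m K α * trPoly q m K (β * δ) -
            trPoly q m K (α * δ) * trPoly q m K β} := sub_mem g1.2 g2.2
    have hinj : Function.Injective (fun i => ((pts i : K))) :=
      fun a b hab => hpts (Units.ext hab)
    have hsub : (Finset.univ.image fun i => ((pts i : K))) ⊆ d.roots.toFinset := by
      intro x hx
      obtain ⟨i, _, rfl⟩ := Finset.mem_image.mp hx
      rw [Multiset.mem_toFinset, mem_roots hdz]
      exact hroot i
    have hcard : (Finset.univ.image fun i => ((pts i : K))).card
        = (q ^ m - 1) / (q - 1) := by
      rw [Finset.card_image_of_injective _ hinj, Finset.card_univ, Fintype.card_fin]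
    have h1 : (q ^ m - 1) / (q - 1) ≤ d.natDegree := by
      calc (q ^ m - 1) / (q - 1)
          = (Finset.univ.image fun i => ((pts i : K))).card := hcard.symm
        _ ≤ d.roots.toFinset.card := Finset.card_le_card hsub
        _ ≤ Multiset.card d.roots := Multiset.toFinset_card_le _
        _ ≤ d.natDegree := card_roots' d
    have h2 : d.natDegree ≤ q ^ (m - 1) + q ^ (m - 2) := hdeg d hdmem
    have h3 : q ^ (m - 1) + q ^ (m - 2) < (q ^ m - 1) / (q - 1) := D_lt_N q m hq2 hm
    omega
end
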